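/- arXiv:1907.01926 — 5 statements merged into one kernel-verified Lean document; each statement's English description precedes it below -/
import Mathlib

section
/- Let d ∈ ℕ, m > 0 and ε > 0, and let ν be a measure on ℝ with ∫_{|r|>1} |r|^ε ν(dr) < ∞. Then for every c ∈ (0, m·min(ε,1)/d), the double integral ∫_{|r|>1} |r| (∫₀^{1/|r|} (e^{(c/m)·log(α^{−1})} − 1)^d dα) ν(dr) is finite. -/
open MeasureTheory Set

theorem stmt_3 (d : ℕ) (hd : 0 < d) (m ε : ℝ) (hm : 0 < m) (hε : 0 < ε)
    (ν : Measure ℝ)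
    (hν : ∫⁻ r in {r : ℝ | 1 < |r|}, ENNReal.ofReal (|r| ^ ε) ∂ν < ⊤) :
    ∀ c ∈ Ioo (0 : ℝ) (m * min ε 1 / d),
      ∫⁻ r in {r : ℝ | 1 < |r|},
        ENNReal.ofReal (|r| *
          ∫ α in Ioo (0 : ℝ) (1 / |r|),
            (Real.exp ((c / m) * Real.log α⁻¹) - 1) ^ d) ∂ν < ⊤ := by
  rintro c ⟨hc0, hc1⟩
  have hdm : (0:ℝ) < d := by exact_mod_cast hd
  set s : ℝ := -(c * d / m) with hs
  have hcd : c * d / m < min ε 1 := by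
    rw [div_lt_iff₀ hm, mul_comm (min ε 1) m]
    calc c * d < m * min ε 1 / d * d := by
          exact mul_lt_mul_of_pos_right hc1 hdm
      _ = m * min ε 1 := by field_simp
  have hcd1 : c * d / m < 1 := hcd.trans_le (min_le_right _ _)
  have hcdε : c * d / m ≤ ε := (hcd.trans_le (min_le_left _ _)).le
  have hcdpos : 0 < c * d / m := by positivity
  have hs1 : 0 < s + 1 := by simp only [hs]; linarith
  have hsgt : -1 < s := by linarith
  set K : ℝ := (s + 1)⁻¹ with hKdef
  have hK : 0 ≤ K := (inv_pos.mpr hs1).le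
  have key : ∀ r ∈ {r : ℝ | 1 < |r|},
      ENNReal.ofReal (|r| *
          ∫ α in Ioo (0 : ℝ) (1 / |r|),
            (Real.exp ((c / m) * Real.log α⁻¹) - 1) ^ d)
        ≤ ENNReal.ofReal (K * |r| ^ ε) := by
    intro r hr
    simp only [mem_setOf_eq] at hr
    have hr0 : (0:ℝ) < |r| := lt_trans one_pos hr
    set b : ℝ := 1 / |r| with hbdef
    have hb0 : 0 < b := by positivity
    have hb1 : b < 1 := by
      rw [hbdef, div_lt_one hr0]; exact hr
    apply ENNReal.ofReal_le_ofReal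
    have hint_le : (∫ α in Ioo (0 : ℝ) b,
        (Real.exp ((c / m) * Real.log α⁻¹) - 1) ^ d) ≤ ∫ α in Ioo (0 : ℝ) b, α ^ s := by
      apply integral_mono_of_nonneg
      · filter_upwards [ae_restrict_mem measurableSet_Ioo] with α hα
        have h1 : 1 ≤ Real.exp ((c / m) * Real.log α⁻¹) := by
          apply Real.one_le_exp
          apply mul_nonneg (le_of_lt (div_pos hc0 hm))
          apply Real.log_nonneg
          rw [le_inv_comm₀ one_pos hα.1]
          simpa using le_of_lt (hα.2.trans hb1)
        exact pow_nonneg (by linarith) d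
      · exact (intervalIntegral.integrableOn_Ioo_rpow_iff hb0).mpr hsgt
      · filter_upwards [ae_restrict_mem measurableSet_Ioo] with α hα
        have hα0 : 0 < α := hα.1
        have h1 : 1 ≤ Real.exp ((c / m) * Real.log α⁻¹) := by
          apply Real.one_le_exp
          apply mul_nonneg (le_of_lt (div_pos hc0 hm))
          apply Real.log_nonneg
          rw [le_inv_comm₀ one_pos hα.1]
          simpa using le_of_lt (hα.2.trans hb1)
        have heq : Real.exp ((c / m) * Real.log α⁻¹) ^ d = α ^ s := by
          rw [Real.rpow_def_of_pos hα0, ← Real.exp_nat_mul]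
          congr 1
          rw [Real.log_inv, hs]
          push_cast
          ring
        calc (Real.exp ((c / m) * Real.log α⁻¹) - 1) ^ d
            ≤ Real.exp ((c / m) * Real.log α⁻¹) ^ d := by
              apply pow_le_pow_left₀ (by linarith) (by linarith)
          _ = α ^ s := heq
    have hval : (∫ α in Ioo (0 : ℝ) b, α ^ s) = b ^ (s + 1) / (s + 1) := by
      rw [← integral_Ioc_eq_integral_Ioo, ← intervalIntegral.integral_of_le hb0.le,
        integral_rpow (Or.inl hsgt), Real.zero_rpow (by linarith : s + 1 ≠ 0), sub_zero]
    calc |r| * (∫ α in Ioo (0 : ℝ) b,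
          (Real.exp ((c / m) * Real.log α⁻¹) - 1) ^ d)
        ≤ |r| * (b ^ (s + 1) / (s + 1)) := by
          apply mul_le_mul_of_nonneg_left _ hr0.le
          rw [← hval]; exact hint_le
      _ = K * |r| ^ (-s) := by
          rw [hbdef, one_div, Real.inv_rpow hr0.le, ← Real.rpow_neg hr0.le]
          rw [div_eq_mul_inv, ← hKdef, ← mul_assoc]
          rw [show |r| * |r| ^ (-(s+1)) = |r| ^ (1:ℝ) * |r| ^ (-(s+1)) from by
            rw [Real.rpow_one], ← Real.rpow_add hr0]
          ring_nf
      _ ≤ K * |r| ^ ε := by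
          apply mul_le_mul_of_nonneg_left _ hK
          apply Real.rpow_le_rpow_of_exponent_le hr.le
          rw [hs, neg_neg]; exact hcdε
  calc ∫⁻ r in {r : ℝ | 1 < |r|},
        ENNReal.ofReal (|r| *
          ∫ α in Ioo (0 : ℝ) (1 / |r|),
            (Real.exp ((c / m) * Real.log α⁻¹) - 1) ^ d) ∂ν
      ≤ ∫⁻ r in {r : ℝ | 1 < |r|}, ENNReal.ofReal (K * |r| ^ ε) ∂ν := by
        apply setLIntegral_mono' _ key
        have : {r : ℝ | 1 < |r|} = {r : ℝ | 1 < r} ∪ {r : ℝ | r < -1} := by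
          ext r; simp [lt_abs, lt_neg]
        rw [this]
        exact (measurableSet_lt measurable_const measurable_id).union
          (measurableSet_lt measurable_id measurable_const)
      _ = ENNReal.ofReal K * ∫⁻ r in {r : ℝ | 1 < |r|}, ENNReal.ofReal (|r| ^ ε) ∂ν := by
        simp_rw [ENNReal.ofReal_mul hK]
        rw [lintegral_const_mul' _ _ ENNReal.ofReal_ne_top]
      _ < ⊤ := ENNReal.mul_lt_top ENNReal.ofReal_lt_top hν
end

section
/- Let d ∈ ℕ, β ∈ (0,1) and let ν be a measure on ℝ with ν({0}) = 0, ∫_ℝ min(1,x²) ν(dx) < ∞ and ∫_{|r|>1} (log|r|)^{d/β} ν(dr) < ∞. Then for every c > 0, the double integral ∫_{|r|>1} |r| (∫₀^{1/|r|} (c·log(α^{−1}))^{d/β} dα) ν(dr) is finite. -/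
open MeasureTheory Set

lemma aux_rpow_add_le {a b p : ℝ} (ha : 0 ≤ a) (hb : 0 ≤ b) (hp : 0 ≤ p) :
    (a + b) ^ p ≤ 2 ^ p * (a ^ p + b ^ p) := by
  have h1 : a + b ≤ 2 * max a b := by
    rcases le_total a b with h | h
    · rw [max_eq_right h]; linarith
    · rw [max_eq_left h]; linarith
  calc (a + b) ^ p ≤ (2 * max a b) ^ p :=
        Real.rpow_le_rpow (by positivity) h1 hp
    _ = 2 ^ p * (max a b) ^ p := Real.mul_rpow (by norm_num) (le_max_iff.2 (Or.inl ha))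
    _ ≤ 2 ^ p * (a ^ p + b ^ p) := by
        have : (max a b) ^ p ≤ a ^ p + b ^ p := by
          rcases max_cases a b with ⟨h, _⟩ | ⟨h, _⟩ <;> rw [h]
          · nlinarith [Real.rpow_nonneg hb p]
          · nlinarith [Real.rpow_nonneg ha p]
        have h2 : (0:ℝ) ≤ 2 ^ p := Real.rpow_nonneg (by norm_num) p
        nlinarith [this]

lemma aux_key {c t R : ℝ} (hc : 0 < c) (ht : 1 ≤ t) (hR : 1 < R) :
    R * ∫ α in Ioo (0 : ℝ) (1 / R), (c * Real.log α⁻¹) ^ t ≤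
      (2 * c) ^ t * (Real.log R) ^ t + 2 * (2 * c) ^ t * (2 * t) ^ t := by
  have hR0 : (0 : ℝ) < R := lt_trans one_pos hR
  have ht0 : (0 : ℝ) < t := lt_of_lt_of_le one_pos ht
  set E : ℝ := 1 / R with hE_def
  have hE0 : 0 < E := by positivity
  set L : ℝ := Real.log R with hL_def
  have hL0 : 0 ≤ L := Real.log_nonneg hR.le
  set A : ℝ := (2 * c) ^ t * L ^ t with hA_def
  set B : ℝ := (2 * c) ^ t * (2 * t) ^ t * R ^ (-(2⁻¹) : ℝ) with hB_def
  have hA0 : 0 ≤ A := by positivity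
  have hB0 : 0 ≤ B := by positivity
  set g : ℝ → ℝ := fun α => A + B * α ^ (-(2⁻¹) : ℝ) with hg_def
  -- integrability of g
  have hint_rpow : IntegrableOn (fun α : ℝ => α ^ (-(2⁻¹) : ℝ)) (Ioo 0 E) := by
    have := intervalIntegral.intervalIntegrable_rpow' (a := 0) (b := E)
      (r := (-(2⁻¹) : ℝ)) (by norm_num)
    rw [intervalIntegrable_iff_integrableOn_Ioc_of_le hE0.le] at this
    exact this.mono_set Ioo_subset_Ioc_self
  have hintg : IntegrableOn g (Ioo 0 E) := by
    apply Integrable.add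
    · exact integrableOn_const measure_Ioo_lt_top.ne
    · exact hint_rpow.const_mul B
  have hE1 : E < 1 := by
    rw [hE_def]
    exact (div_lt_one hR0).2 hR
  -- pointwise bound
  have hfg : ∀ α ∈ Ioo (0 : ℝ) E, (c * Real.log α⁻¹) ^ t ≤ g α := by
    intro α hα
    obtain ⟨hα0, hαE⟩ := hα
    have hRα0 : 0 < R * α := by positivity
    have hRα1 : R * α < 1 := by
      have h := (lt_div_iff₀ hR0).1 (hE_def ▸ hαE)
      linarith [h]
    have hx0 : (0 : ℝ) < (R * α)⁻¹ := by positivity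
    set M : ℝ := Real.log (R * α)⁻¹ with hM_def
    have hM0 : 0 ≤ M := Real.log_nonneg (one_le_inv_iff₀.2 ⟨hRα0, hRα1.le⟩)
    have hlog : Real.log α⁻¹ = L + M := by
      rw [hM_def, hL_def, Real.log_inv, Real.log_inv,
        Real.log_mul (ne_of_gt hR0) (ne_of_gt hα0)]
      ring
    have hsplit : ((R * α)⁻¹) ^ ((2:ℝ)⁻¹) = R ^ (-(2⁻¹) : ℝ) * α ^ (-(2⁻¹) : ℝ) := by
      rw [mul_inv, Real.mul_rpow (by positivity) (by positivity),
        Real.inv_rpow hR0.le, Real.inv_rpow hα0.le,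
        ← Real.rpow_neg hR0.le, ← Real.rpow_neg hα0.le]
    have hMt : M ^ t ≤ (2 * t) ^ t * ((R * α)⁻¹) ^ ((2:ℝ)⁻¹) := by
      have h1 : M ≤ 2 * t * (((R * α)⁻¹) ^ ((2 * t)⁻¹ : ℝ)) := by
        have h2 := Real.log_le_rpow_div hx0.le
          (by positivity : (0:ℝ) < (2 * t)⁻¹)
        calc M ≤ ((R * α)⁻¹) ^ ((2 * t)⁻¹ : ℝ) / (2 * t)⁻¹ := h2
          _ = 2 * t * (((R * α)⁻¹) ^ ((2 * t)⁻¹ : ℝ)) := by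
              rw [div_eq_mul_inv, inv_inv]; ring
      calc M ^ t ≤ (2 * t * (((R * α)⁻¹) ^ ((2 * t)⁻¹ : ℝ))) ^ t :=
            Real.rpow_le_rpow hM0 h1 ht0.le
        _ = (2 * t) ^ t * ((R * α)⁻¹) ^ ((2:ℝ)⁻¹) := by
            rw [Real.mul_rpow (by positivity) (by positivity),
              ← Real.rpow_mul hx0.le]
            rw [show ((2 * t)⁻¹ : ℝ) * t = 2⁻¹ by
              rw [mul_inv, mul_assoc, inv_mul_cancel₀ ht0.ne', mul_one]]
    have hlog1 : 0 ≤ Real.log α⁻¹ := by rw [hlog]; positivity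
    have h2c : ((2:ℝ) * c) ^ t = 2 ^ t * c ^ t := Real.mul_rpow (by norm_num) hc.le
    have hct : (0:ℝ) ≤ c ^ t := by positivity
    have h2t : (0:ℝ) ≤ 2 ^ t := by positivity
    calc (c * Real.log α⁻¹) ^ t = c ^ t * (L + M) ^ t := by
          rw [hlog, Real.mul_rpow hc.le (by linarith)]
      _ ≤ c ^ t * (2 ^ t * (L ^ t + M ^ t)) := by
          have h := aux_rpow_add_le hL0 hM0 ht0.le
          exact mul_le_mul_of_nonneg_left h hct
      _ ≤ c ^ t * (2 ^ t * (L ^ t + (2 * t) ^ t * ((R * α)⁻¹) ^ ((2:ℝ)⁻¹))) := by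
          have := mul_le_mul_of_nonneg_left
            (mul_le_mul_of_nonneg_left (by linarith [hMt] :
              L ^ t + M ^ t ≤ L ^ t + (2 * t) ^ t * ((R * α)⁻¹) ^ ((2:ℝ)⁻¹)) h2t) hct
          linarith [this]
      _ = g α := by
          simp only [hg_def, hA_def, hB_def, hsplit, h2c]
          ring
  -- monotonicity of the integral
  have hmono : (∫ α in Ioo (0 : ℝ) E, (c * Real.log α⁻¹) ^ t) ≤
      ∫ α in Ioo (0 : ℝ) E, g α := by
    apply integral_mono_of_nonneg _ hintg
    · filter_upwards [ae_restrict_mem measurableSet_Ioo] with α hα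
      exact hfg α hα
    · filter_upwards [ae_restrict_mem measurableSet_Ioo] with α hα
      have h1 : 0 ≤ Real.log α⁻¹ :=
        Real.log_nonneg (one_le_inv_iff₀.2 ⟨hα.1, by linarith [hα.2, hE1]⟩)
      positivity
  -- value of the integral of g
  have hgval : (∫ α in Ioo (0 : ℝ) E, g α) = A * E + B * (2 * E ^ ((2:ℝ)⁻¹)) := by
    rw [hg_def, integral_add (integrableOn_const (C := A) measure_Ioo_lt_top.ne)
      (hint_rpow.const_mul B), setIntegral_const, integral_const_mul]
    have hvol : (volume (Ioo (0 : ℝ) E)).toReal = E := by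
      rw [Real.volume_Ioo, sub_zero, ENNReal.toReal_ofReal hE0.le]
    have hrint : (∫ α in Ioo (0 : ℝ) E, α ^ (-(2⁻¹) : ℝ)) = 2 * E ^ ((2:ℝ)⁻¹) := by
      rw [← integral_Ioc_eq_integral_Ioo, ← intervalIntegral.integral_of_le hE0.le,
        integral_rpow (Or.inl (by norm_num))]
      rw [Real.zero_rpow (by norm_num : (-(2⁻¹) : ℝ) + 1 ≠ 0)]
      norm_num
      ring
    rw [measureReal_def, hvol, hrint, smul_eq_mul, mul_comm]
  -- final arithmetic
  have hEhalf : E ^ ((2:ℝ)⁻¹) = R ^ (-(2⁻¹) : ℝ) := by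
    rw [hE_def, one_div, Real.inv_rpow hR0.le, ← Real.rpow_neg hR0.le]
  have hRR : R * (R ^ (-(2⁻¹) : ℝ) * R ^ (-(2⁻¹) : ℝ)) = 1 := by
    rw [← Real.rpow_add hR0]
    norm_num
    rw [Real.rpow_neg_one, mul_inv_cancel₀ hR0.ne']
  have hRE : R * E = 1 := by rw [hE_def]; field_simp
  calc R * ∫ α in Ioo (0 : ℝ) (1 / R), (c * Real.log α⁻¹) ^ t
      ≤ R * (A * E + B * (2 * E ^ ((2:ℝ)⁻¹))) := by
        rw [← hgval]
        exact mul_le_mul_of_nonneg_left (by rw [hE_def] at hmono ⊢; exact hmono) hR0.le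
    _ = A * (R * E) + 2 * (2 * c) ^ t * (2 * t) ^ t *
          (R * (R ^ (-(2⁻¹) : ℝ) * R ^ (-(2⁻¹) : ℝ))) := by
        rw [hEhalf, hB_def]; ring
    _ = (2 * c) ^ t * Real.log R ^ t + 2 * (2 * c) ^ t * (2 * t) ^ t := by
        rw [hRR, hRE, hA_def, hL_def]; ring

theorem stmt_4 (d : ℕ) (hd : 0 < d) (β : ℝ) (hβ : β ∈ Ioo (0 : ℝ) 1)
    (ν : Measure ℝ)
    (hν0 : ν {0} = 0)
    (hν1 : ∫⁻ x, ENNReal.ofReal (min 1 (x ^ 2)) ∂ν < ⊤)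
    (hν2 : ∫⁻ r in {r : ℝ | 1 < |r|},
        ENNReal.ofReal ((Real.log |r|) ^ ((d : ℝ) / β)) ∂ν < ⊤) :
    ∀ c > (0 : ℝ),
      ∫⁻ r in {r : ℝ | 1 < |r|},
        ENNReal.ofReal (|r| *
          ∫ α in Ioo (0 : ℝ) (1 / |r|),
            (c * Real.log α⁻¹) ^ ((d : ℝ) / β)) ∂ν < ⊤ := by
  intro c hc
  obtain ⟨hβ0, hβ1⟩ := hβ
  set t : ℝ := (d : ℝ) / β with ht_def
  have hd1 : (1 : ℝ) ≤ d := by exact_mod_cast hd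
  have ht : 1 ≤ t := by
    rw [ht_def, le_div_iff₀ hβ0]; nlinarith
  set S : Set ℝ := {r : ℝ | 1 < |r|} with hS_def
  have hSm : MeasurableSet S := measurableSet_lt measurable_const measurable_abs
  have hνS : ν S < ⊤ := by
    have h1 : ν S = ∫⁻ x in S, ENNReal.ofReal (min 1 (x ^ 2)) ∂ν := by
      rw [← setLIntegral_one]
      refine setLIntegral_congr_fun hSm (fun x hx => ?_)
      have hx2 : (1 : ℝ) < |x| := hx
      have hx1 : (1 : ℝ) ≤ x ^ 2 := by nlinarith [abs_nonneg x, sq_abs x]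
      rw [min_eq_left hx1, ENNReal.ofReal_one]
    rw [h1]
    exact lt_of_le_of_lt (setLIntegral_le_lintegral _ _) hν1
  set K1 : ℝ := (2 * c) ^ t with hK1_def
  set K2 : ℝ := 2 * (2 * c) ^ t * (2 * t) ^ t with hK2_def
  have hb : ∀ r ∈ S,
      ENNReal.ofReal (|r| * ∫ α in Ioo (0 : ℝ) (1 / |r|), (c * Real.log α⁻¹) ^ t)
        ≤ ENNReal.ofReal K1 * ENNReal.ofReal ((Real.log |r|) ^ t) + ENNReal.ofReal K2 := by
    intro r hr
    have hr1 : 1 < |r| := hr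
    have hlog0 : 0 ≤ Real.log |r| := Real.log_nonneg hr1.le
    have h := aux_key hc ht hr1
    calc ENNReal.ofReal (|r| * ∫ α in Ioo (0 : ℝ) (1 / |r|), (c * Real.log α⁻¹) ^ t)
        ≤ ENNReal.ofReal (K1 * (Real.log |r|) ^ t + K2) := ENNReal.ofReal_le_ofReal h
      _ = _ := by
          rw [ENNReal.ofReal_add (mul_nonneg (by positivity)
            (Real.rpow_nonneg hlog0 t)) (by positivity),
            ENNReal.ofReal_mul (by positivity)]
  have hmeas : Measurable fun r : ℝ =>
      ENNReal.ofReal ((Real.log |r|) ^ t) :=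
    ENNReal.measurable_ofReal.comp
      ((Real.continuous_rpow_const (by linarith : (0:ℝ) ≤ t)).measurable.comp
        (Real.measurable_log.comp measurable_abs))
  calc ∫⁻ r in S, ENNReal.ofReal (|r| *
          ∫ α in Ioo (0 : ℝ) (1 / |r|), (c * Real.log α⁻¹) ^ t) ∂ν
      ≤ ∫⁻ r in S, (ENNReal.ofReal K1 * ENNReal.ofReal ((Real.log |r|) ^ t)
          + ENNReal.ofReal K2) ∂ν := setLIntegral_mono' hSm hb
    _ = ENNReal.ofReal K1 * (∫⁻ r in S, ENNReal.ofReal ((Real.log |r|) ^ t) ∂ν)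
          + ENNReal.ofReal K2 * ν S := by
        rw [lintegral_add_right _ measurable_const,
          lintegral_const_mul _ hmeas, setLIntegral_const]
    _ < ⊤ := by
        apply ENNReal.add_lt_top.2
        constructor
        · exact ENNReal.mul_lt_top ENNReal.ofReal_lt_top hν2
        · exact ENNReal.mul_lt_top ENNReal.ofReal_lt_top hνS
end

section
/- Let d ∈ ℕ and let ν be a measure on ℝ. Let g : ℝ^d → [0,∞) be measurable with λ^d({x : g(x) > α}) < ∞ for every α > 0 and ∫_{|r|>1} |r| (∫₀^{1/|r|} λ^d({x : g(x) > α}) dα) ν(dr) < ∞. Let (φ_n)_{n∈ℕ} be measurable functions φ_n : ℝ^d → ℝ and (c_n)_{n∈ℕ} ⊂ (0,1] with c_n → 0 such that |φ_n(x)| ≤ c_n · g(x) for all x ∈ ℝ^d and n ∈ ℕ. Then ∫_{|r|>1} |r| (∫₀^{1/|r|} λ^d({x : |φ_n(x)| > α}) dα) ν(dr) → 0 as n → ∞. -/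
open MeasureTheory Set Filter

theorem stmt_6 (d : ℕ) (hd : 0 < d) (ν : Measure ℝ)
    (g : EuclideanSpace ℝ (Fin d) → ℝ) (hg_meas : Measurable g)
    (hg_nonneg : ∀ x, 0 ≤ g x)
    (hg_fin : ∀ α > (0 : ℝ), volume {x | g x > α} < ⊤)
    (hg_int : ∫⁻ r in {r : ℝ | 1 < |r|},
        (ENNReal.ofReal |r| *
          ∫⁻ α in Ioo (0 : ℝ) (1 / |r|), volume {x | g x > α}) ∂ν < ⊤)
    (φ : ℕ → EuclideanSpace ℝ (Fin d) → ℝ) (hφ_meas : ∀ n, Measurable (φ n))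
    (c : ℕ → ℝ) (hc_mem : ∀ n, c n ∈ Ioc (0 : ℝ) 1)
    (hc_lim : Tendsto c atTop (nhds 0))
    (hφ_le : ∀ n x, |φ n x| ≤ c n * g x) :
    Tendsto (fun n =>
        ∫⁻ r in {r : ℝ | 1 < |r|},
          (ENNReal.ofReal |r| *
            ∫⁻ α in Ioo (0 : ℝ) (1 / |r|), volume {x | |φ n x| > α}) ∂ν)
      atTop (nhds 0) := by
  set D : ℝ → ENNReal := fun α => volume {x | g x > α} with hD_def
  have hD_anti : Antitone D := fun a b hab =>
    measure_mono fun x hx => lt_of_le_of_lt hab hx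
  -- D tends to 0 at infinity
  have hD_lim : Tendsto D atTop (nhds 0) := by
    have h0 : (⋂ α : ℝ, {x : EuclideanSpace ℝ (Fin d) | g x > α}) = ∅ := by
      ext x
      simp only [mem_iInter, mem_empty_iff_false, iff_false, not_forall, mem_setOf_eq]
      obtain ⟨n, hn⟩ := exists_nat_gt (g x)
      exact ⟨n, not_lt.2 hn.le⟩
    have h := tendsto_measure_iInter_atTop (μ := volume)
      (s := fun α : ℝ => {x | g x > α})
      (fun α => (measurableSet_lt measurable_const hg_meas).nullMeasurableSet)
      (fun a b hab x hx => lt_of_le_of_lt hab hx)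
      ⟨1, (hg_fin 1 one_pos).ne⟩
    rw [h0, measure_empty] at h
    exact h
  -- divergence of α / c n
  have hc_inv : Tendsto (fun n => (c n)⁻¹) atTop atTop :=
    Tendsto.inv_tendsto_nhdsGT_zero
      (tendsto_nhdsWithin_iff.mpr ⟨hc_lim, Eventually.of_forall fun n => (hc_mem n).1⟩)
  have hdiv : ∀ α : ℝ, 0 < α → Tendsto (fun n => α / c n) atTop atTop := by
    intro α hα
    simpa [div_eq_mul_inv] using hc_inv.const_mul_atTop hα
  -- pointwise bounds on the distribution functions
  have key_le : ∀ n (α : ℝ), volume {x | |φ n x| > α} ≤ D α := by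
    intro n α
    refine measure_mono fun x hx => ?_
    have h1 : α < |φ n x| := hx
    have h2 : c n * g x ≤ g x :=
      mul_le_of_le_one_left (hg_nonneg x) (hc_mem n).2
    exact lt_of_lt_of_le h1 ((hφ_le n x).trans h2)
  have key_le2 : ∀ n (α : ℝ), 0 < α → volume {x | |φ n x| > α} ≤ D (α / c n) := by
    intro n α hα
    refine measure_mono fun x hx => ?_
    have h1 : α < |φ n x| := hx
    have h2 : α < g x * c n := by
      have := lt_of_lt_of_le h1 (hφ_le n x)
      linarith [this, mul_comm (c n) (g x)]
    exact (div_lt_iff₀ (hc_mem n).1).2 h2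
  -- measurability of the outer integrands
  have hJ_meas : ∀ Q : ℝ → ENNReal,
      Measurable fun r : ℝ => ENNReal.ofReal |r| * ∫⁻ α in Ioo (0 : ℝ) (1 / |r|), Q α := by
    intro Q
    have hmono : Monotone fun t : ℝ => ∫⁻ α in Ioo (0 : ℝ) t, Q α :=
      fun a b hab => lintegral_mono_set (Ioo_subset_Ioo le_rfl hab)
    exact (measurable_abs.ennreal_ofReal).mul
      (hmono.measurable.comp (measurable_const.div measurable_abs))
  have hS : MeasurableSet {r : ℝ | 1 < |r|} := measurableSet_lt measurable_const measurable_abs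
  -- a.e. finiteness of the dominating function's inner integral
  have hfin : ∀ᵐ r ∂ν.restrict {r : ℝ | 1 < |r|},
      (∫⁻ α in Ioo (0 : ℝ) (1 / |r|), D α) < ⊤ := by
    filter_upwards [ae_lt_top (hJ_meas D) hg_int.ne, ae_restrict_mem hS] with r hr hrS
    have h1 : ENNReal.ofReal |r| ≠ 0 := by
      simp only [ne_eq, ENNReal.ofReal_eq_zero, not_le]
      have : (1 : ℝ) < |r| := hrS
      linarith
    rw [lt_top_iff_ne_top]
    intro hb
    rw [hb, ENNReal.mul_top h1] at hr
    exact lt_irrefl _ hr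
  have hmain := tendsto_lintegral_of_dominated_convergence
    (μ := ν.restrict {r : ℝ | 1 < |r|})
    (F := fun n r => ENNReal.ofReal |r| * ∫⁻ α in Ioo (0 : ℝ) (1 / |r|),
      volume {x | |φ n x| > α})
    (f := fun _ => 0)
    (fun r => ENNReal.ofReal |r| * ∫⁻ α in Ioo (0 : ℝ) (1 / |r|), D α)
    (fun n => hJ_meas _)
    (fun n => Eventually.of_forall fun r =>
      mul_le_mul_right (lintegral_mono fun α => key_le n α) _)
    hg_int.ne
    ?_
  · simpa using hmain
  -- a.e. pointwise convergence to 0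
  filter_upwards [hfin] with r hrfin
  have hbig : ∀ n, (∫⁻ α in Ioo (0 : ℝ) (1 / |r|), volume {x | |φ n x| > α}) ≤
      ∫⁻ α in Ioo (0 : ℝ) (1 / |r|), D (α / c n) := by
    intro n
    refine setLIntegral_mono ((hD_anti.comp_monotone ?_).measurable) fun α hα => key_le2 n α hα.1
    intro a b hab
    have h := (hc_mem n).1
    show a / c n ≤ b / c n
    gcongr
  have hU : Tendsto (fun n => ∫⁻ α in Ioo (0 : ℝ) (1 / |r|), D (α / c n)) atTop (nhds 0) := by
    have h := tendsto_lintegral_of_dominated_convergence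
      (μ := volume.restrict (Ioo (0 : ℝ) (1 / |r|)))
      (F := fun n α => D (α / c n)) (f := fun _ => 0) D
      (fun n => (hD_anti.comp_monotone
        (fun a b hab => by
          have h := (hc_mem n).1
          show a / c n ≤ b / c n
          gcongr)).measurable)
      (fun n => by
        filter_upwards [ae_restrict_mem measurableSet_Ioo] with α hα
        have : α ≤ α / c n := by
          rw [le_div_iff₀ (hc_mem n).1]
          exact mul_le_of_le_one_right hα.1.le (hc_mem n).2
        exact hD_anti this)
      hrfin.ne
      (by
        filter_upwards [ae_restrict_mem measurableSet_Ioo] with α hα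
        exact hD_lim.comp (hdiv α hα.1))
    simpa using h
  have hUp : Tendsto (fun n => ENNReal.ofReal |r| *
      ∫⁻ α in Ioo (0 : ℝ) (1 / |r|), D (α / c n)) atTop (nhds 0) := by
    have := ENNReal.Tendsto.const_mul (a := ENNReal.ofReal |r|) hU (Or.inr ENNReal.ofReal_ne_top)
    simpa using this
  refine tendsto_of_tendsto_of_tendsto_of_le_of_le tendsto_const_nhds hUp
    (fun n => zero_le) (fun n => mul_le_mul_right (hbig n) _)
end

section
/- Let d ∈ ℕ and let σ : [0,∞) → [0,∞) be increasing, continuous and concave with σ(0) = 0 and ∫₀^∞ σ(t)/(1+t²) dt < ∞; set ω(x) := σ(‖x‖) for x ∈ ℝ^d. Let G : ℝ^d → ℂ be measurable with |G(x)| ≤ C e^{−κ‖x‖} for all x ∈ ℝ^d, for some constants C, κ > 0. Then for every η > 0 there exists a constant C_η > 0 such that for every measurable φ : ℝ^d → ℂ with M := sup_{x∈ℝ^d} e^{η ω(x)} |φ(x)| < ∞ and every x ∈ ℝ^d, |(G ∗ φ)(x)| ≤ C_η · M · e^{−η ω(x)}, where (G ∗ φ)(x) = ∫_{ℝ^d}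 G(y) φ(x−y) λ^d(dy). -/
open MeasureTheory Set

-- auxiliary: exp decay is integrable on EuclideanSpace
lemma aux_exp_integrable (d : ℕ) (c : ℝ) (hc : 0 < c) :
    Integrable (fun y : EuclideanSpace ℝ (Fin d) => Real.exp (-c * ‖y‖)) := by
  set n : ℕ := d + 1
  have hint1 : Integrable (fun y : EuclideanSpace ℝ (Fin d) => (1 + ‖y‖) ^ (-(n : ℝ))) :=
    integrable_one_add_norm (by rw [finrank_euclideanSpace_fin]; exact_mod_cast Nat.lt_succ_self d)
  set A : ℝ := max 1 ((n : ℝ) / c) with hA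
  have hA1 : (1 : ℝ) ≤ A := le_max_left _ _
  have hA2 : (n : ℝ) / c ≤ A := le_max_right _ _
  have hbound : ∀ y : EuclideanSpace ℝ (Fin d),
      Real.exp (-c * ‖y‖) ≤ A ^ n * (1 + ‖y‖) ^ (-(n : ℝ)) := by
    intro y
    set t := ‖y‖ with htdef
    have ht : 0 ≤ t := norm_nonneg y
    have hn : (0 : ℝ) < n := by positivity
    have h1 : 1 + t ≤ A * (1 + c * t / n) := by
      have h1a : t ≤ A * (c * t / n) := by
        have he : (n / c) * (c * t / n) = t := by field_simp
        nlinarith [mul_le_mul_of_nonneg_right hA2 (show (0:ℝ) ≤ c * t / n by positivity)]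
      nlinarith
    have h2 : (1 + c * t / n) ^ n ≤ Real.exp (c * t) := by
      have := Real.add_one_le_exp (c * t / n)
      calc (1 + c * t / n) ^ n ≤ (Real.exp (c * t / n)) ^ n := by
              apply pow_le_pow_left₀ (by positivity) (by linarith)
        _ = Real.exp (c * t) := by
              rw [← Real.exp_nat_mul]; congr 1; field_simp
    have h3 : (1 + t) ^ n ≤ A ^ n * Real.exp (c * t) := by
      calc (1 + t) ^ n ≤ (A * (1 + c * t / n)) ^ n :=
            pow_le_pow_left₀ (by positivity) h1 n
        _ = A ^ n * (1 + c * t / n) ^ n := mul_pow _ _ _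
        _ ≤ A ^ n * Real.exp (c * t) := by
            apply mul_le_mul_of_nonneg_left h2 (by positivity)
    have hpos : (0 : ℝ) < 1 + t := by linarith
    rw [show (-(n : ℝ)) = -(n : ℕ) by norm_num, Real.rpow_neg hpos.le, Real.rpow_natCast]
    rw [neg_mul, Real.exp_neg]
    rw [inv_le_iff_one_le_mul₀ (Real.exp_pos _)]
    have hp : (0:ℝ) < (1 + t) ^ n := by positivity
    rw [show A ^ n * ((1 + t) ^ n)⁻¹ * Real.exp (c * t)
        = (A ^ n * Real.exp (c * t)) / ((1 + t) ^ n) from by ring,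
      le_div_iff₀ hp, one_mul]
    exact h3
  refine (hint1.const_mul (A ^ n)).mono' ?_ (Filter.Eventually.of_forall ?_)
  · exact (Real.continuous_exp.comp ((continuous_const.mul continuous_norm))).aestronglyMeasurable
  · intro y
    rw [Real.norm_eq_abs, abs_of_pos (Real.exp_pos _)]
    exact hbound y

lemma aux_subadd (σ : ℝ → ℝ) (hσ_concave : ConcaveOn ℝ (Ici (0 : ℝ)) σ)
    (hσ_zero : σ 0 = 0) :
    ∀ a b : ℝ, 0 ≤ a → 0 ≤ b → σ (a + b) ≤ σ a + σ b := by
  intro a b ha hb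
  rcases eq_or_lt_of_le (by linarith : (0:ℝ) ≤ a + b) with h | h
  · have ha0 : a = 0 := by linarith
    have hb0 : b = 0 := by linarith
    simp [ha0, hb0, hσ_zero]
  · have hmem : a + b ∈ Ici (0:ℝ) := le_of_lt h
    have h0 : (0:ℝ) ∈ Ici (0:ℝ) := mem_Ici.mpr le_rfl
    have h1 := hσ_concave.2 hmem h0 (by positivity : (0:ℝ) ≤ a / (a+b))
      (by positivity : (0:ℝ) ≤ b / (a+b)) (by field_simp)
    have h2 := hσ_concave.2 hmem h0 (by positivity : (0:ℝ) ≤ b / (a+b))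
      (by positivity : (0:ℝ) ≤ a / (a+b)) (by field_simp; ring)
    simp only [smul_eq_mul, mul_zero, add_zero, hσ_zero] at h1 h2
    have e1 : a / (a+b) * (a+b) = a := by field_simp
    have e2 : b / (a+b) * (a+b) = b := by field_simp
    rw [e1] at h1
    rw [e2] at h2
    have := add_le_add h1 h2
    have e3 : a / (a+b) * σ (a+b) + b / (a+b) * σ (a+b) = σ (a+b) := by
      field_simp
    linarith

lemma aux_scale (σ : ℝ → ℝ) (hσ_concave : ConcaveOn ℝ (Ici (0 : ℝ)) σ)
    (hσ_zero : σ 0 = 0) :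
    ∀ s t : ℝ, 0 < s → s ≤ t → (s / t) * σ t ≤ σ s := by
  intro s t hs hst
  have ht : 0 < t := lt_of_lt_of_le hs hst
  have h1 := hσ_concave.2 (mem_Ici.mpr ht.le) (mem_Ici.mpr le_rfl)
    (by positivity : (0:ℝ) ≤ s / t)
    (by
      have : s / t ≤ 1 := (div_le_one ht).mpr hst
      linarith : (0:ℝ) ≤ 1 - s / t) (by ring)
  simp only [smul_eq_mul, mul_zero, add_zero, hσ_zero] at h1
  have e1 : s / t * t = s := by field_simp
  rw [e1] at h1
  linarith

lemma aux_t0 (σ : ℝ → ℝ)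
    (hσ_int : IntegrableOn (fun t => σ t / (1 + t ^ 2)) (Ici (0 : ℝ)))
    (ε : ℝ) (hε : 0 < ε) : ∃ t0 : ℝ, 1 ≤ t0 ∧ σ t0 ≤ ε * t0 := by
  by_contra h
  push_neg at h
  have hint : IntegrableOn (fun t => σ t / (1 + t ^ 2)) (Ioi 1) :=
    hσ_int.mono_set (fun t ht => mem_Ici.mpr (le_trans zero_le_one (le_of_lt (mem_Ioi.mp ht))))
  have h2 : IntegrableOn (fun t : ℝ => (ε / 2) * t⁻¹) (Ioi 1) := by
    apply Integrable.mono' hint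
    · exact ((continuousOn_const.mul (continuousOn_inv₀.mono
        (fun t (ht : t ∈ Ioi (1:ℝ)) => ne_of_gt (lt_trans one_pos ht)))).aestronglyMeasurable
        measurableSet_Ioi)
    · filter_upwards [ae_restrict_mem measurableSet_Ioi] with t ht
      have ht1 : (1:ℝ) < t := ht
      have htpos : (0:ℝ) < t := lt_trans one_pos ht1
      rw [Real.norm_eq_abs, abs_of_pos (by positivity)]
      have hσt : ε * t < σ t := h t ht1.le
      have step1 : (ε / 2) * t⁻¹ ≤ ε * t / (1 + t ^ 2) := by
        rw [show (ε / 2) * t⁻¹ = ε / (2 * t) from by field_simp,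
          div_le_div_iff₀ (by positivity) (by positivity)]
        have h12 : (1:ℝ) ≤ t ^ 2 := by nlinarith
        nlinarith [mul_le_mul_of_nonneg_left h12 hε.le]
      have step2 : ε * t / (1 + t ^ 2) ≤ σ t / (1 + t ^ 2) := by
        gcongr
      linarith
  have h3 : IntegrableOn (fun t : ℝ => t⁻¹) (Ioi 1) := by
    have h2' := h2.const_mul (2 / ε)
    refine IntegrableOn.congr_fun h2' (fun t ht => ?_) measurableSet_Ioi
    have ht' : t ≠ 0 := ne_of_gt (lt_trans one_pos ht)
    field_simp
  have h4 : IntegrableOn (fun t : ℝ => t ^ (-1 : ℝ)) (Ioi 1) := by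
    refine IntegrableOn.congr_fun h3 (fun t ht => ?_) measurableSet_Ioi
    show t⁻¹ = t ^ (-1 : ℝ)
    rw [Real.rpow_neg_one]
  rw [integrableOn_Ioi_rpow_iff one_pos] at h4
  linarith

theorem stmt_8 (d : ℕ) (hd : 0 < d) (σ : ℝ → ℝ)
    (hσ_nonneg : ∀ t ∈ Ici (0 : ℝ), 0 ≤ σ t)
    (hσ_mono : MonotoneOn σ (Ici (0 : ℝ)))
    (hσ_cont : ContinuousOn σ (Ici (0 : ℝ)))
    (hσ_concave : ConcaveOn ℝ (Ici (0 : ℝ)) σ)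
    (hσ_zero : σ 0 = 0)
    (hσ_int : IntegrableOn (fun t => σ t / (1 + t ^ 2)) (Ici (0 : ℝ)))
    (G : EuclideanSpace ℝ (Fin d) → ℂ) (hG_meas : Measurable G)
    (C κ : ℝ) (hC : 0 < C) (hκ : 0 < κ)
    (hG_le : ∀ x, ‖G x‖ ≤ C * Real.exp (-κ * ‖x‖)) :
    ∀ η > (0 : ℝ), ∃ Cη > (0 : ℝ),
      ∀ (φ : EuclideanSpace ℝ (Fin d) → ℂ), Measurable φ →
        ∀ M : ℝ, (∀ x, Real.exp (η * σ ‖x‖) * ‖φ x‖ ≤ M) →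
          ∀ x, ‖∫ y, G y * φ (x - y)‖ ≤ Cη * M * Real.exp (-η * σ ‖x‖) := by
  intro η hη
  set ε : ℝ := κ / (2 * η) with hεdef
  have hε : 0 < ε := by positivity
  obtain ⟨t0, ht0_ge, ht0⟩ := aux_t0 σ hσ_int ε hε
  have ht0pos : (0:ℝ) < t0 := lt_of_lt_of_le one_pos ht0_ge
  -- linear bound on σ
  have hσbound : ∀ t : ℝ, 0 ≤ t → σ t ≤ σ t0 + ε * t := by
    intro t ht
    rcases le_total t t0 with h | h
    · have h1 := hσ_mono (mem_Ici.mpr ht) (mem_Ici.mpr ht0pos.le) h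
      nlinarith
    · have htpos : 0 < t := lt_of_lt_of_le ht0pos h
      have hscale := aux_scale σ hσ_concave hσ_zero t0 t ht0pos h
      have h1 : t0 * σ t ≤ σ t0 * t := by
        have := mul_le_mul_of_nonneg_right hscale htpos.le
        rw [div_mul_eq_mul_div, div_mul_eq_mul_div, mul_div_assoc,
          div_self (ne_of_gt htpos), mul_one] at this
        linarith
      have h2 : σ t0 * t ≤ ε * t0 * t :=
        mul_le_mul_of_nonneg_right ht0 htpos.le
      have h3 : t0 * σ t ≤ t0 * (ε * t) := by nlinarith
      have h4 : σ t ≤ ε * t := le_of_mul_le_mul_left h3 ht0pos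
      have h5 : 0 ≤ σ t0 := hσ_nonneg t0 (mem_Ici.mpr ht0pos.le)
      linarith
  -- integrable exponential kernel
  have hKint := aux_exp_integrable d (κ / 2) (by positivity)
  set I : ℝ := ∫ y : EuclideanSpace ℝ (Fin d), Real.exp (-(κ/2) * ‖y‖) with hIdef
  have hInonneg : 0 ≤ I := integral_nonneg (fun y => (Real.exp_pos _).le)
  refine ⟨C * Real.exp (η * σ t0) * I + 1, by positivity, ?_⟩
  intro φ hφ M hM x
  have hM0 : 0 ≤ M := le_trans (by positivity) (hM 0)
  -- pointwise bound of the integrand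
  have hptwise : ∀ y : EuclideanSpace ℝ (Fin d),
      ‖G y * φ (x - y)‖ ≤
        (C * Real.exp (η * σ t0) * M * Real.exp (-η * σ ‖x‖)) * Real.exp (-(κ/2) * ‖y‖) := by
    intro y
    rw [norm_mul]
    have hφle : ‖φ (x - y)‖ ≤ M * Real.exp (-η * σ ‖x - y‖) := by
      have h1 := hM (x - y)
      have h2 : ‖φ (x - y)‖ =
          Real.exp (-η * σ ‖x - y‖) * (Real.exp (η * σ ‖x - y‖) * ‖φ (x - y)‖) := by
        rw [← mul_assoc, ← Real.exp_add]
        simp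
      rw [h2, mul_comm (M : ℝ)]
      exact mul_le_mul_of_nonneg_left h1 (Real.exp_pos _).le
    have htri : ‖x‖ ≤ ‖y‖ + ‖x - y‖ := by
      have : x = y + (x - y) := by abel
      calc ‖x‖ = ‖y + (x - y)‖ := by rw [← this]
        _ ≤ ‖y‖ + ‖x - y‖ := norm_add_le _ _
    have hσx : σ ‖x‖ ≤ σ ‖y‖ + σ ‖x - y‖ := by
      have h1 : σ ‖x‖ ≤ σ (‖y‖ + ‖x - y‖) :=
        hσ_mono (mem_Ici.mpr (norm_nonneg _))
          (mem_Ici.mpr (by positivity)) htri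
      have h2 := aux_subadd σ hσ_concave hσ_zero ‖y‖ ‖x - y‖ (norm_nonneg _) (norm_nonneg _)
      linarith
    have hσy : σ ‖y‖ ≤ σ t0 + ε * ‖y‖ := hσbound ‖y‖ (norm_nonneg _)
    calc ‖G y‖ * ‖φ (x - y)‖
        ≤ (C * Real.exp (-κ * ‖y‖)) * (M * Real.exp (-η * σ ‖x - y‖)) := by
          apply mul_le_mul (hG_le y) hφle (norm_nonneg _) (by positivity)
      _ = (C * M) * Real.exp (-κ * ‖y‖ + -η * σ ‖x - y‖) := by
          rw [Real.exp_add]; ring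
      _ ≤ (C * M) * Real.exp (η * σ t0 + -η * σ ‖x‖ + -(κ/2) * ‖y‖) := by
          apply mul_le_mul_of_nonneg_left _ (by positivity)
          apply Real.exp_le_exp.mpr
          have e1 : η * σ ‖x‖ ≤ η * (σ ‖y‖ + σ ‖x - y‖) :=
            mul_le_mul_of_nonneg_left hσx hη.le
          have e2 : η * σ ‖y‖ ≤ η * (σ t0 + ε * ‖y‖) :=
            mul_le_mul_of_nonneg_left hσy hη.le
          have e3 : η * ε = κ / 2 := by
            rw [hεdef]; field_simp
          have e2' : η * σ ‖y‖ ≤ η * σ t0 + (κ / 2) * ‖y‖ := by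
            rw [mul_add, ← mul_assoc, e3] at e2; linarith
          rw [mul_add] at e1
          linarith
      _ = (C * Real.exp (η * σ t0) * M * Real.exp (-η * σ ‖x‖)) * Real.exp (-(κ/2) * ‖y‖) := by
          rw [Real.exp_add, Real.exp_add]; ring
  have hbd := norm_integral_le_of_norm_le
    (hKint.const_mul (C * Real.exp (η * σ t0) * M * Real.exp (-η * σ ‖x‖)))
    (Filter.Eventually.of_forall hptwise)
  rw [integral_const_mul] at hbd
  calc ‖∫ y, G y * φ (x - y)‖
      ≤ (C * Real.exp (η * σ t0) * M * Real.exp (-η * σ ‖x‖)) * I := hbd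
    _ ≤ (C * Real.exp (η * σ t0) * I + 1) * M * Real.exp (-η * σ ‖x‖) := by
        nlinarith [Real.exp_pos (-η * σ ‖x‖), mul_nonneg hM0 (Real.exp_pos (-η * σ ‖x‖)).le]
end

section
/- Let d ∈ ℕ, δ > 0, a > 0 and C ≥ 0, and let f : ℂ^d → ℂ be holomorphic on the strip A_δ := {z ∈ ℂ^d : ‖Im z‖ < δ} and satisfy |f(z)| ≤ C e^{−a‖z‖} for all z ∈ A_δ. Then for every l ∈ (0, δ) there exists a constant C' ≥ 0 such that ‖(Df)(z)‖ ≤ C' e^{−a‖z‖} for all z ∈ ℂ^d with ‖Im z‖ ≤ l, where Df denotes the complex (Fréchet) derivative of f. -/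
open Set Metric

noncomputable def imVec (d : ℕ) (z : EuclideanSpace ℂ (Fin d)) : EuclideanSpace ℝ (Fin d) :=
  (WithLp.equiv 2 (Fin d → ℝ)).symm (fun j => (z j).im)

lemma imVec_apply (d : ℕ) (z : EuclideanSpace ℂ (Fin d)) (j : Fin d) :
    imVec d z j = (z j).im := rfl

lemma imnorm_eq (d : ℕ) (z : EuclideanSpace ℂ (Fin d)) :
    Real.sqrt (∑ j, (z j).im ^ 2) = ‖imVec d z‖ := by
  rw [EuclideanSpace.norm_eq]
  congr 1
  refine Finset.sum_congr rfl fun j _ => ?_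
  rw [imVec_apply, Real.norm_eq_abs, sq_abs]

lemma imnorm_le (d : ℕ) (z : EuclideanSpace ℂ (Fin d)) :
    Real.sqrt (∑ j, (z j).im ^ 2) ≤ ‖z‖ := by
  rw [EuclideanSpace.norm_eq]
  apply Real.sqrt_le_sqrt
  apply Finset.sum_le_sum
  intro j _
  have h : ((z j).im) ^ 2 ≤ ‖z j‖ ^ 2 := by
    rw [← sq_abs]
    exact pow_le_pow_left₀ (abs_nonneg _) (Complex.abs_im_le_norm _) 2
  simpa using h

lemma imnorm_triangle (d : ℕ) (z w : EuclideanSpace ℂ (Fin d)) :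
    Real.sqrt (∑ j, (w j).im ^ 2) ≤ Real.sqrt (∑ j, (z j).im ^ 2) + ‖w - z‖ := by
  have key : imVec d w = imVec d z + imVec d (w - z) := by
    ext j
    have hwz : (w - z) j = w j - z j := rfl
    simp only [PiLp.add_apply, imVec_apply, hwz, Complex.sub_im]
    ring
  rw [imnorm_eq, imnorm_eq, key]
  refine (norm_add_le _ _).trans ?_
  gcongr
  rw [← imnorm_eq]
  exact imnorm_le d (w - z)

lemma strip_open (d : ℕ) (δ : ℝ) :
    IsOpen {z : EuclideanSpace ℂ (Fin d) | Real.sqrt (∑ j, (z j).im ^ 2) < δ} := by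
  have hc : Continuous fun z : EuclideanSpace ℂ (Fin d) => Real.sqrt (∑ j, (z j).im ^ 2) := by
    apply Real.continuous_sqrt.comp
    apply continuous_finset_sum
    intro j _
    exact (Complex.continuous_im.comp ((continuous_apply j).comp
      (PiLp.continuous_ofLp (p := 2) (β := fun _ : Fin d => ℂ)))).pow 2
  exact isOpen_lt hc continuous_const

theorem stmt_14 (d : ℕ) (hd : 0 < d) (δ a C : ℝ) (hδ : 0 < δ) (ha : 0 < a) (hC : 0 ≤ C)
    (f : EuclideanSpace ℂ (Fin d) → ℂ)
    (hf_hol : DifferentiableOn ℂ f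
      {z : EuclideanSpace ℂ (Fin d) | Real.sqrt (∑ j, (z j).im ^ 2) < δ})
    (hf_le : ∀ z : EuclideanSpace ℂ (Fin d),
      Real.sqrt (∑ j, (z j).im ^ 2) < δ → ‖f z‖ ≤ C * Real.exp (-a * ‖z‖)) :
    ∀ l ∈ Ioo (0 : ℝ) δ, ∃ C' ≥ (0 : ℝ),
      ∀ z : EuclideanSpace ℂ (Fin d), Real.sqrt (∑ j, (z j).im ^ 2) ≤ l →
        ‖fderiv ℂ f z‖ ≤ C' * Real.exp (-a * ‖z‖) := by
  intro l hl
  set S := {z : EuclideanSpace ℂ (Fin d) | Real.sqrt (∑ j, (z j).im ^ 2) < δ} with hS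
  have hSopen := strip_open d δ
  set r : ℝ := (δ - l) / 2 with hr
  have hr0 : 0 < r := by simp only [hr]; linarith [hl.2]
  refine ⟨C * Real.exp (a * r) / r, by positivity, ?_⟩
  intro z hz
  have hball : ∀ w ∈ closedBall z r, w ∈ S := by
    intro w hw
    rw [mem_closedBall, dist_eq_norm] at hw
    have h2 : Real.sqrt (∑ j, (w j).im ^ 2) ≤ l + r :=
      (imnorm_triangle d z w).trans (add_le_add hz hw)
    have h3 : l + r < δ := by simp only [hr]; linarith [hl.1]
    exact lt_of_le_of_lt h2 h3
  have hzS : z ∈ S := hball z (mem_closedBall_self hr0.le)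
  have hfz : HasFDerivAt f (fderiv ℂ f z) z :=
    (hf_hol.differentiableAt (hSopen.mem_nhds hzS)).hasFDerivAt
  set M : ℝ := C * Real.exp (a * r) * Real.exp (-a * ‖z‖) with hM
  have hM0 : 0 ≤ M := by positivity
  have hgoal : C * Real.exp (a * r) / r * Real.exp (-a * ‖z‖) = M / r := by
    rw [hM]; ring
  rw [hgoal]
  apply ContinuousLinearMap.opNorm_le_bound _ (by positivity)
  intro v
  rcases eq_or_ne v 0 with rfl | hv
  · simp [div_nonneg hM0 hr0.le]
  have hvn : (0 : ℝ) < ‖v‖ := norm_pos_iff.mpr hv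
  set u := (‖v‖ : ℂ)⁻¹ • v with hu
  have hun : ‖u‖ = 1 := by
    rw [hu, norm_smul, norm_inv, Complex.norm_real, Real.norm_eq_abs, abs_of_pos hvn,
      inv_mul_cancel₀ hvn.ne']
  have hvu : v = (‖v‖ : ℂ) • u := by
    rw [hu, smul_smul, mul_inv_cancel₀ (by exact_mod_cast hvn.ne'), one_smul]
  have key : ‖fderiv ℂ f z u‖ ≤ M / r := by
    set g : ℂ → ℂ := fun t => f (z + t • u) with hg
    have hmap : ∀ t : ℂ, ‖t‖ ≤ r → z + t • u ∈ S := by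
      intro t ht
      apply hball
      rw [mem_closedBall, dist_eq_norm]
      simpa [norm_smul, hun] using ht
    have hline : ∀ t : ℂ, HasDerivAt (fun s : ℂ => z + s • u) u t := by
      intro t
      simpa using ((hasDerivAt_id t).smul_const u).const_add z
    have hgd : HasDerivAt g (fderiv ℂ f z u) 0 := by
      have hfz' : HasFDerivAt f (fderiv ℂ f z) (z + (0 : ℂ) • u) := by simpa using hfz
      exact hfz'.comp_hasDerivAt 0 (hline 0)
    have hdiff : DifferentiableOn ℂ g (closedBall (0 : ℂ) r) := by
      intro t ht
      rw [mem_closedBall, dist_zero_right] at ht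
      have h1 : DifferentiableAt ℂ f (z + t • u) :=
        hf_hol.differentiableAt (hSopen.mem_nhds (hmap t ht))
      exact (h1.comp t (hline t).differentiableAt).differentiableWithinAt
    have hgdiff : DiffContOnCl ℂ g (ball (0 : ℂ) r) :=
      DiffContOnCl.mk (hdiff.mono ball_subset_closedBall)
        (by rw [closure_ball _ hr0.ne']; exact hdiff.continuousOn)
    have hbound : ∀ t ∈ sphere (0 : ℂ) r, ‖g t‖ ≤ M := by
      intro t ht
      rw [mem_sphere, dist_zero_right] at ht
      have hmem : z + t • u ∈ S := hmap t ht.le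
      have h1 : ‖g t‖ ≤ C * Real.exp (-a * ‖z + t • u‖) := hf_le _ hmem
      have h2 : ‖z‖ - r ≤ ‖z + t • u‖ := by
        have htu : ‖t • u‖ = r := by rw [norm_smul, hun, mul_one, ht]
        have h3 : ‖z‖ ≤ ‖z + t • u‖ + ‖t • u‖ := by
          calc ‖z‖ = ‖(z + t • u) - t • u‖ := by rw [add_sub_cancel_right]
            _ ≤ ‖z + t • u‖ + ‖t • u‖ := norm_sub_le _ _
        linarith
      calc ‖g t‖ ≤ C * Real.exp (-a * ‖z + t • u‖) := h1
        _ ≤ C * Real.exp (-a * (‖z‖ - r)) := by gcongr _ * Real.exp ?_; nlinarith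
        _ = M := by rw [hM, mul_assoc, ← Real.exp_add]; ring_nf
    have := Complex.norm_deriv_le_of_forall_mem_sphere_norm_le hr0 hgdiff hbound
    rwa [hgd.deriv] at this
  calc ‖fderiv ℂ f z v‖ = ‖fderiv ℂ f z ((‖v‖ : ℂ) • u)‖ := by rw [← hvu]
    _ = ‖v‖ * ‖fderiv ℂ f z u‖ := by
        rw [map_smul, norm_smul, Complex.norm_real, Real.norm_eq_abs, abs_of_pos hvn]
    _ ≤ ‖v‖ * (M / r) := by gcongr
    _ = M / r * ‖v‖ := by ring
end
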